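/- arXiv:1408.3692 — 5 statements merged into one kernel-verified Lean document; each statement's English description precedes it below -/
import Mathlib

section
/- Every stopping strategy of Type I is also a stopping strategy of Type II; i.e., if ρ : 𝒯 → 𝒯 satisfies: for all σ₁,σ₂ ∈ 𝒯, either (ρ(σ₁)=ρ(σ₂) and ρ(σ₁) ≤ σ₁∧σ₂) or ρ(σ₁)∧ρ(σ₂) > σ₁∧σ₂, then it satisfies: for all σ₁,σ₂ ∈ 𝒯, either (ρ(σ₁)=ρ(σ₂) and ρ(σ₁) < σ₁∧σ₂) or ρ(σ₁)∧ρ(σ₂) ≥ σ₁∧σ₂. -/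
open MeasureTheory

theorem eq_and_lt_or_le_min_of_eq_and_le_or_lt_min {α : Type*} [LinearOrder α] {a b c : α}
    (h : (a = b ∧ a ≤ c) ∨ c < min a b) : (a = b ∧ a < c) ∨ c ≤ min a b := by
  rcases h with ⟨rfl, hac⟩ | hlt
  · rcases hac.lt_or_eq with hac | rfl
    · exact .inl ⟨rfl, hac⟩
    · exact .inr (min_self a).ge
  · exact .inr hlt.le

theorem stmt_1_general {Ω : Type*}
    (𝒯 : Set (Ω → ℕ))
    (ρ : (Ω → ℕ) → (Ω → ℕ))
    (hI : ∀ σ₁ ∈ 𝒯, ∀ σ₂ ∈ 𝒯, ∀ ω,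
      (ρ σ₁ ω = ρ σ₂ ω ∧ ρ σ₁ ω ≤ min (σ₁ ω) (σ₂ ω)) ∨
        min (σ₁ ω) (σ₂ ω) < min (ρ σ₁ ω) (ρ σ₂ ω)) :
    ∀ σ₁ ∈ 𝒯, ∀ σ₂ ∈ 𝒯, ∀ ω,
      (ρ σ₁ ω = ρ σ₂ ω ∧ ρ σ₁ ω < min (σ₁ ω) (σ₂ ω)) ∨
        min (σ₁ ω) (σ₂ ω) ≤ min (ρ σ₁ ω) (ρ σ₂ ω) :=
  fun σ₁ h₁ σ₂ h₂ ω => eq_and_lt_or_le_min_of_eq_and_le_or_lt_min (hI σ₁ h₁ σ₂ h₂ ω)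

/-- Every stopping strategy of Type I is also a stopping strategy of Type II. -/
theorem stmt_1 {Ω : Type*} {m : MeasurableSpace Ω} (ℱ : Filtration ℕ m) (T : ℕ)
    (𝒯 : Set (Ω → ℕ))
    (h𝒯 : 𝒯 = {σ | IsStoppingTime ℱ (fun ω => (σ ω : WithTop ℕ)) ∧ ∀ ω, σ ω ≤ T})
    (ρ : (Ω → ℕ) → (Ω → ℕ))
    (hmap : ∀ σ ∈ 𝒯, ρ σ ∈ 𝒯)
    (hI : ∀ σ₁ ∈ 𝒯, ∀ σ₂ ∈ 𝒯, ∀ ω,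
      (ρ σ₁ ω = ρ σ₂ ω ∧ ρ σ₁ ω ≤ min (σ₁ ω) (σ₂ ω)) ∨
        min (σ₁ ω) (σ₂ ω) < min (ρ σ₁ ω) (ρ σ₂ ω)) :
    ∀ σ₁ ∈ 𝒯, ∀ σ₂ ∈ 𝒯, ∀ ω,
      (ρ σ₁ ω = ρ σ₂ ω ∧ ρ σ₁ ω < min (σ₁ ω) (σ₂ ω)) ∨
        min (σ₁ ω) (σ₂ ω) ≤ min (ρ σ₁ ω) (ρ σ₂ ω) :=
  stmt_1_general 𝒯 ρ hI
end

section
/- Let ρ_d be a stopping time, and for each stopping time τ let ρ_u(τ) be a stopping time with ρ_u(τ) ≥ τ, such that ρ_u(τ) depends on τ only through the event structure as in the composed family (i.e., ρ_u(τ)(ω)=ρ_u(τ(ω))(ω) for a family ρ_u(i) ≥ i). Then the map ρ*(τ) := ρ_d·1_{τ > ρ_d} + ρ_u(τ)·1_{τ ≤ ρ_d} is a stopping strategy of Type II: for any stopping times τ₁, τ₂, either ρ*(τ₁)=ρ*(τ₂) < τ₁∧τ₂ or ρ*(τ₁)∧ρ*(τ₂) ≥ τ₁∧τ₂. -/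
/-!
On `{ρ_d < τ}` the strategy stops at `ρ_d`, and on `{τ ≤ ρ_d}` it follows `ρ_u(τ) ≥ τ`.
The event `{ρ_d < τ}` lies in `ℱ_{ρ_d}` and `{τ ≤ ρ_d}` in `ℱ_τ`, and `ρ_u(τ) ≥ τ` makes
`{ρ_u(τ) ≤ t}` a subset of `{τ ≤ t}`, so `ρ*(τ)` is a stopping time. For non-anticipativity:
if `ρ_d` lies below both `τ₁` and `τ₂`, both strategies stop at `ρ_d < τ₁ ∧ τ₂`; otherwise
each `ρ*(τₖ)` is either `ρ_d ≥ τₖ` or `ρ_u(τₖ) ≥ τₖ`, hence at least `τ₁ ∧ τ₂`.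
-/

open MeasureTheory

theorem ite_lt_eq_and_lt_min_or_min_le_min {α : Type*} [LinearOrder α] {d τ₁ τ₂ σ₁ σ₂ : α}
    (h₁ : τ₁ ≤ σ₁) (h₂ : τ₂ ≤ σ₂) :
    ((if d < τ₁ then d else σ₁) = (if d < τ₂ then d else σ₂) ∧
        (if d < τ₁ then d else σ₁) < min τ₁ τ₂) ∨
      min τ₁ τ₂ ≤ min (if d < τ₁ then d else σ₁) (if d < τ₂ then d else σ₂) := by
  split_ifs with hd₁ hd₂ hd₂
  · exact Or.inl ⟨rfl, lt_min hd₁ hd₂⟩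
  all_goals right; grind

namespace MeasureTheory.IsStoppingTime

variable {Ω ι : Type*} {m : MeasurableSpace Ω}

theorem ite_lt [LinearOrder ι] [TopologicalSpace ι] [SecondCountableTopology ι]
    [OrderTopology ι] {f : Filtration ι m} {τ π σ : Ω → WithTop ι} (hτ : IsStoppingTime f τ)
    (hπ : IsStoppingTime f π) (hσ : IsStoppingTime f σ) (hτσ : τ ≤ σ) :
    IsStoppingTime f fun ω => if π ω < τ ω then π ω else σ ω := by
  intro i
  have hset : {ω | (if π ω < τ ω then π ω else σ ω) ≤ i} =
      ({ω | τ ω ≤ π ω}ᶜ ∩ {ω | π ω ≤ i}) ∪ ({ω | τ ω ≤ π ω} ∩ {ω | τ ω ≤ i} ∩ {ω | σ ω ≤ i}) := by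
    ext ω
    have := hτσ ω
    simp only [Set.mem_ofPred_eq, Set.mem_union, Set.mem_inter_iff, Set.mem_compl_iff]
    split_ifs <;> grind
  rw [hset]
  exact (((hπ.measurableSet _).mp (measurableSet_stopping_time_le hτ hπ).compl).2 i).union
    ((((hτ.measurableSet _).mp (measurableSet_le_stopping_time hτ hπ)).2 i).inter (hσ i))

theorem comp_of_le [PartialOrder ι] [Countable ι] {f : Filtration ι m} {τ : Ω → ι} {ρ : ι → Ω → WithTop ι}
    (hτ : IsStoppingTime f fun ω => (τ ω : WithTop ι)) (hρ : ∀ i ∈ Set.range τ, IsStoppingTime f (ρ i))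
    (hle : ∀ ω, (τ ω : WithTop ι) ≤ ρ (τ ω) ω) :
    IsStoppingTime f fun ω => ρ (τ ω) ω := by
  intro t
  have hset : {ω | ρ (τ ω) ω ≤ t} =
      ⋃ i ∈ Set.range τ ∩ Set.Iic t, {ω | τ ω = i} ∩ {ω | ρ i ω ≤ t} := by
    ext ω
    simp only [Set.mem_ofPred_eq, Set.mem_iUnion, Set.mem_inter_iff, Set.mem_range,
      Set.mem_Iic, exists_prop]
    constructor
    · intro h
      exact ⟨τ ω, ⟨⟨ω, rfl⟩, WithTop.coe_le_coe.mp ((hle ω).trans h)⟩, rfl, h⟩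
    · rintro ⟨i, -, rfl, h⟩
      exact h
  rw [hset]
  refine MeasurableSet.biUnion (Set.to_countable _) fun i ⟨hi, hit⟩ => ?_
  have hτi : MeasurableSet[f i] {ω | τ ω = i} := by
    simpa using hτ.measurableSet_eq_of_countable i
  exact (f.mono hit _ hτi).inter (hρ i hi t)

end MeasureTheory.IsStoppingTime

/-- The map `ρ*(τ) := ρ_d·1_{τ > ρ_d} + ρ_u(τ)·1_{τ ≤ ρ_d}` maps stopping times to
stopping times and is a stopping strategy of Type II. -/
theorem stmt_6 {Ω : Type*} {m : MeasurableSpace Ω} (ℱ : Filtration ℕ m) (T : ℕ)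
    (ρd : Ω → ℕ) (hρd : IsStoppingTime ℱ (fun ω => (ρd ω : WithTop ℕ))) (hρdT : ∀ ω, ρd ω ≤ T)
    (ρu : ℕ → Ω → ℕ)
    (hρu : ∀ i ≤ T, IsStoppingTime ℱ (fun ω => (ρu i ω : WithTop ℕ)))
    (hρuge : ∀ i ≤ T, ∀ ω, i ≤ ρu i ω)
    (hρuT : ∀ i ≤ T, ∀ ω, ρu i ω ≤ T)
    (ρstar : (Ω → ℕ) → Ω → ℕ)
    (hρstar : ∀ τ ω, ρstar τ ω = if ρd ω < τ ω then ρd ω else ρu (τ ω) ω) :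
    -- ρ*(τ) is a stopping time for every stopping time τ
    (∀ τ : Ω → ℕ, IsStoppingTime ℱ (fun ω => (τ ω : WithTop ℕ)) → (∀ ω, τ ω ≤ T) →
      IsStoppingTime ℱ (fun ω => (ρstar τ ω : WithTop ℕ)) ∧ ∀ ω, ρstar τ ω ≤ T) ∧
    -- non-anticipativity of Type II
    (∀ τ₁ : Ω → ℕ, IsStoppingTime ℱ (fun ω => (τ₁ ω : WithTop ℕ)) → (∀ ω, τ₁ ω ≤ T) →
     ∀ τ₂ : Ω → ℕ, IsStoppingTime ℱ (fun ω => (τ₂ ω : WithTop ℕ)) → (∀ ω, τ₂ ω ≤ T) →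
      ∀ ω, (ρstar τ₁ ω = ρstar τ₂ ω ∧ ρstar τ₁ ω < min (τ₁ ω) (τ₂ ω)) ∨
        min (τ₁ ω) (τ₂ ω) ≤ min (ρstar τ₁ ω) (ρstar τ₂ ω)) := by
  refine ⟨fun τ hτ hτT => ⟨?_, fun ω => ?_⟩, fun τ₁ _ hτ₁T τ₂ _ hτ₂T ω => ?_⟩
  · have hcast : (fun ω => (ρstar τ ω : WithTop ℕ)) = fun ω =>
        if (ρd ω : WithTop ℕ) < τ ω then (ρd ω : WithTop ℕ) else (ρu (τ ω) ω : WithTop ℕ) := by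
      funext ω
      simp only [hρstar, Nat.cast_lt]
      split_ifs <;> rfl
    have hρuτ : IsStoppingTime ℱ fun ω => (ρu (τ ω) ω : WithTop ℕ) :=
      IsStoppingTime.comp_of_le (ρ := fun i ω => ρu i ω) hτ
        (fun _ ⟨ω, hω⟩ => hω ▸ hρu _ (hτT ω)) fun ω => Nat.cast_le.mpr (hρuge _ (hτT ω) ω)
    rw [hcast]
    exact IsStoppingTime.ite_lt hτ hρd hρuτ fun ω => Nat.cast_le.mpr (hρuge _ (hτT ω) ω)
  · rw [hρstar]
    split_ifs
    exacts [hρdT ω, hρuT _ (hτT ω) ω]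
  · simp only [hρstar]
    exact ite_lt_eq_and_lt_min_or_min_le_min (hρuge _ (hτ₁T ω) ω) (hρuge _ (hτ₂T ω) ω)
end

section
/- With ρ*, τ* defined by ρ*(τ)=ρ_d·1_{τ>ρ_d}+ρ_u(τ)·1_{τ≤ρ_d} and τ*(ρ)=τ_d·1_{τ_d ≤ ρ(τ_d)}+τ_u(ρ(τ_d))·1_{τ_d > ρ(τ_d)}, where ρ_u(σ) ≥ σ and τ_u(t) ≥ t+1 for t<T, the composed optimizers satisfy: ρ*(τ*(ρ*)) = ρ_d·1_{τ_d>ρ_d} + ρ_u(τ_d)·1_{τ_d≤ρ_d} and τ*(ρ*) = τ_d·1_{τ_d≤ρ_d} + τ_u(ρ_d)·1_{τ_d>ρ_d} (almost surely, pointwise on Ω). -/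
open MeasureTheory

/-!
Because `ρ_u(τ_d) ≥ τ_d`, we have `τ_d ≤ ρ*(τ_d)` iff `τ_d ≤ ρ_d`, and `ρ*(τ_d) = ρ_d` otherwise;
this computes `τ*(ρ*)`. Because `τ_u(ρ_d) > ρ_d` whenever `ρ_d < τ_d ≤ T`, it follows that
`ρ_d < τ*(ρ*)` iff `ρ_d < τ_d`, and on the complement `τ*(ρ*) = τ_d`; this computes `ρ*(τ*(ρ*))`.
-/

section Optimizers

variable {Ω : Type*} {ρd τd : Ω → ℕ} {ρu τu : ℕ → Ω → ℕ}
  {ρstar : (Ω → ℕ) → Ω → ℕ} {τstar : ((Ω → ℕ) → Ω → ℕ) → Ω → ℕ}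

theorem le_rhoStar_iff
    (hρstar : ∀ τ ω, ρstar τ ω = if ρd ω < τ ω then ρd ω else ρu (τ ω) ω)
    {τ : Ω → ℕ} {ω : Ω} (hρuge : τ ω ≤ ρu (τ ω) ω) :
    τ ω ≤ ρstar τ ω ↔ τ ω ≤ ρd ω := by
  rw [hρstar]
  split_ifs with h
  · simp only [h.not_ge]
  · simpa [hρuge] using h

theorem tauStar_rhoStar_eq
    (hρstar : ∀ τ ω, ρstar τ ω = if ρd ω < τ ω then ρd ω else ρu (τ ω) ω)
    (hτstar : ∀ ρ ω, τstar ρ ω = if τd ω ≤ ρ τd ω then τd ω else τu (ρ τd ω) ω)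
    {ω : Ω} (hρuge : τd ω ≤ ρu (τd ω) ω) :
    τstar ρstar ω = if τd ω ≤ ρd ω then τd ω else τu (ρd ω) ω := by
  rw [hτstar]
  by_cases h : τd ω ≤ ρd ω
  · rw [if_pos ((le_rhoStar_iff hρstar hρuge).2 h), if_pos h]
  · have hρ : ρstar τd ω = ρd ω := by rw [hρstar, if_pos (not_le.1 h)]
    rw [hρ, if_neg h]

theorem lt_tauStar_rhoStar_iff
    (hρstar : ∀ τ ω, ρstar τ ω = if ρd ω < τ ω then ρd ω else ρu (τ ω) ω)
    (hτstar : ∀ ρ ω, τstar ρ ω = if τd ω ≤ ρ τd ω then τd ω else τu (ρ τd ω) ω)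
    {ω : Ω} (hρuge : τd ω ≤ ρu (τd ω) ω) (hτuge : ρd ω < τd ω → ρd ω < τu (ρd ω) ω) :
    ρd ω < τstar ρstar ω ↔ ρd ω < τd ω := by
  rw [tauStar_rhoStar_eq hρstar hτstar hρuge]
  split_ifs with h
  · rfl
  · exact iff_of_true (hτuge (not_le.1 h)) (not_le.1 h)

end Optimizers

theorem stmt_8_general {Ω : Type*} (T : ℕ)
    (ρd τd : Ω → ℕ)
    (hτdT : ∀ ω, τd ω ≤ T)
    (ρu τu : ℕ → Ω → ℕ)
    (hρuge : ∀ i ≤ T, ∀ ω, i ≤ ρu i ω)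
    (hτuge : ∀ i, i < T → ∀ ω, i + 1 ≤ τu i ω)
    (ρstar : (Ω → ℕ) → Ω → ℕ)
    (hρstar : ∀ τ ω, ρstar τ ω = if ρd ω < τ ω then ρd ω else ρu (τ ω) ω)
    (τstar : ((Ω → ℕ) → Ω → ℕ) → Ω → ℕ)
    (hτstar : ∀ ρ ω, τstar ρ ω = if τd ω ≤ ρ τd ω then τd ω else τu (ρ τd ω) ω) :
    ∀ ω, ρstar (τstar ρstar) ω = (if ρd ω < τd ω then ρd ω else ρu (τd ω) ω) ∧
      τstar ρstar ω = (if τd ω ≤ ρd ω then τd ω else τu (ρd ω) ω) := by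
  intro ω
  have hρu : τd ω ≤ ρu (τd ω) ω := hρuge _ (hτdT ω) ω
  have hτu (h : ρd ω < τd ω) : ρd ω < τu (ρd ω) ω := hτuge _ (h.trans_le (hτdT ω)) ω
  have hτ := tauStar_rhoStar_eq hρstar hτstar hρu
  refine ⟨?_, hτ⟩
  simp only [hρstar (τstar ρstar), lt_tauStar_rhoStar_iff hρstar hτstar hρu hτu]
  split_ifs with h
  · rfl
  · rw [hτ, if_pos (not_lt.1 h)]

/-- The composed optimizers satisfy
`ρ*(τ*(ρ*)) = ρ_d·1_{τ_d>ρ_d} + ρ_u(τ_d)·1_{τ_d≤ρ_d}` and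
`τ*(ρ*) = τ_d·1_{τ_d≤ρ_d} + τ_u(ρ_d)·1_{τ_d>ρ_d}`, pointwise on `Ω`. -/
theorem stmt_8 {Ω : Type*} {m : MeasurableSpace Ω} (ℱ : Filtration ℕ m) (T : ℕ)
    (ρd τd : Ω → ℕ)
    (hρd : IsStoppingTime ℱ (fun ω => (ρd ω : WithTop ℕ))) (hρdT : ∀ ω, ρd ω ≤ T)
    (hτd : IsStoppingTime ℱ (fun ω => (τd ω : WithTop ℕ))) (hτdT : ∀ ω, τd ω ≤ T)
    (ρu τu : ℕ → Ω → ℕ)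
    (hρu : ∀ i ≤ T, IsStoppingTime ℱ (fun ω => (ρu i ω : WithTop ℕ)))
    (hρuge : ∀ i ≤ T, ∀ ω, i ≤ ρu i ω)
    (hτu : ∀ i ≤ T, IsStoppingTime ℱ (fun ω => (τu i ω : WithTop ℕ)))
    (hτuge : ∀ i, i < T → ∀ ω, i + 1 ≤ τu i ω)
    (hτuT : ∀ ω, τu T ω = T)
    (ρstar : (Ω → ℕ) → Ω → ℕ)
    (hρstar : ∀ τ ω, ρstar τ ω = if ρd ω < τ ω then ρd ω else ρu (τ ω) ω)
    (τstar : ((Ω → ℕ) → Ω → ℕ) → Ω → ℕ)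
    (hτstar : ∀ ρ ω, τstar ρ ω = if τd ω ≤ ρ τd ω then τd ω else τu (ρ τd ω) ω) :
    ∀ ω, ρstar (τstar ρstar) ω = (if ρd ω < τd ω then ρd ω else ρu (τd ω) ω) ∧
      τstar ρstar ω = (if τd ω ≤ ρd ω then τd ω else τu (ρd ω) ω) :=
  stmt_8_general T ρd τd hτdT ρu τu hρuge hτuge ρstar hρstar τstar hτstar
end

section
/- In the Dynkin game with payoff processes V¹ ≤ V² (adapted, bounded, discrete time {0,...,T}, V¹_T = V²_T), the upper and lower values coincide: inf_{ρ∈𝒯} sup_{τ∈𝒯} E[V¹_τ 1_{τ≤ρ} + V²_ρ 1_{τ>ρ}] = sup_{τ∈𝒯} inf_{ρ∈𝒯} E[V¹_τ 1_{τ≤ρ} + V²_ρ 1_{τ>ρ}], and a saddle point is given by ρ_d := inf{s ≥ 0 : V_s = V²_s} and τ_d := inf{s ≥ 0 : V_s = V¹_s}, where V_t is the common conditional value process defined by backward induction V_T = V¹_T, V_t = min( V²_t, max(V¹_t, E[V_{t+1}|ℱ_t]) ). -/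
/-!
Let `𝒱` be the adapted version of the backward-induction value process; `V` agrees with it a.e.
on `{0, …, T}`. It lies between `V¹` and `V²`, and the recursion makes it a supermartingale
strictly before it touches `V²` and a submartingale strictly before it touches `V¹`. Telescoping
its increments up to `τ ∧ ρ_d` (resp. `τ_d ∧ ρ`) therefore gives
`E[payoff(ρ_d, τ)] ≤ E[𝒱_{τ ∧ ρ_d}] ≤ E[𝒱₀] ≤ E[𝒱_{τ_d ∧ ρ}] ≤ E[payoff(ρ, τ_d)]`,
so `(ρ_d, τ_d)` is a saddle point, and a bounded game with a saddle point has a value.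
-/

open MeasureTheory Filter

theorem ciInf_ciSup_eq_ciSup_ciInf_of_saddle {α β : Type*} {f : α → β → ℝ} {C : ℝ}
    (hC : ∀ a b, |f a b| ≤ C) {a₀ : α} {b₀ : β} {v : ℝ}
    (ha₀ : ∀ b, f a₀ b ≤ v) (hb₀ : ∀ a, v ≤ f a b₀) :
    ⨅ a, ⨆ b, f a b = ⨆ b, ⨅ a, f a b := by
  have : Nonempty α := ⟨a₀⟩
  have : Nonempty β := ⟨b₀⟩
  have hAbove : ∀ a, BddAbove (Set.range (f a)) := fun a =>
    ⟨C, Set.forall_mem_range.2 fun b => (abs_le.1 (hC a b)).2⟩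
  have hBelow : ∀ b, BddBelow (Set.range fun a => f a b) := fun b =>
    ⟨-C, Set.forall_mem_range.2 fun a => (abs_le.1 (hC a b)).1⟩
  apply le_antisymm
  · calc ⨅ a, ⨆ b, f a b ≤ ⨆ b, f a₀ b :=
          ciInf_le ⟨-C, Set.forall_mem_range.2 fun a =>
            (abs_le.1 (hC a b₀)).1.trans (le_ciSup (hAbove a) b₀)⟩ a₀
      _ ≤ v := ciSup_le ha₀
      _ ≤ ⨅ a, f a b₀ := le_ciInf hb₀
      _ ≤ ⨆ b, ⨅ a, f a b :=
          le_ciSup ⟨C, Set.forall_mem_range.2 fun b =>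
            (ciInf_le (hBelow b) a₀).trans (abs_le.1 (hC a₀ b)).2⟩ b₀
  · exact le_ciInf fun a => ciSup_mono (hAbove a) fun b => ciInf_le (hBelow b) a

section

variable {Ω : Type*} {m : MeasurableSpace Ω} {μ : Measure Ω} {ℱ : Filtration ℕ m}

theorem sum_indicator_lt_sub_eq (X : ℕ → Ω → ℝ) {σ : Ω → ℕ} {N : ℕ} {ω : Ω} (hσN : σ ω ≤ N) :
    ∑ n ∈ Finset.range N, {ω | n < σ ω}.indicator (X (n + 1) - X n) ω = X (σ ω) ω - X 0 ω := by
  have hfilter : (Finset.range N).filter (· < σ ω) = Finset.range (σ ω) := by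
    ext n; simp only [Finset.mem_filter, Finset.mem_range]; omega
  simp only [Set.indicator_apply, Set.mem_ofPred_eq, Pi.sub_apply]
  rw [← Finset.sum_filter, hfilter, Finset.sum_range_sub (fun n => X n ω)]

theorem integral_stopped_le_of_condExp_le [IsFiniteMeasure μ] {X : ℕ → Ω → ℝ}
    (hX : ∀ n, Integrable (X n) μ) {σ : Ω → ℕ}
    (hσ : IsStoppingTime ℱ (fun ω => (σ ω : WithTop ℕ))) {N : ℕ} (hσN : ∀ ω, σ ω ≤ N)
    (hXσ : ∀ n, ∀ᵐ ω ∂μ, n < σ ω → μ[X (n + 1) | ℱ n] ω ≤ X n ω) :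
    ∫ ω, X (σ ω) ω ∂μ ≤ ∫ ω, X 0 ω ∂μ := by
  have hA : ∀ n, MeasurableSet[ℱ n] {ω | n < σ ω} := fun n => by
    simpa using hσ.measurableSet_gt n
  have hterm : ∀ n, Integrable ({ω | n < σ ω}.indicator (X (n + 1) - X n)) μ := fun n =>
    ((hX _).sub (hX _)).indicator (ℱ.le n _ (hA n))
  have hstep : ∀ n, ∫ ω, {ω | n < σ ω}.indicator (X (n + 1) - X n) ω ∂μ ≤ 0 := fun n => by
    rw [integral_indicator (ℱ.le n _ (hA n))]
    simp only [Pi.sub_apply]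
    rw [integral_sub (hX _).integrableOn (hX _).integrableOn,
      sub_nonpos, ← setIntegral_condExp (ℱ.le n) (hX (n + 1)) (hA n)]
    refine setIntegral_mono_ae_restrict integrable_condExp.integrableOn (hX n).integrableOn ?_
    exact (ae_restrict_iff' (ℱ.le n _ (hA n))).2 (hXσ n)
  calc ∫ ω, X (σ ω) ω ∂μ
      = ∫ ω, X 0 ω + ∑ n ∈ Finset.range N, {ω | n < σ ω}.indicator (X (n + 1) - X n) ω ∂μ := by
        congr 1 with ω
        rw [sum_indicator_lt_sub_eq X (hσN ω), add_sub_cancel]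
    _ = ∫ ω, X 0 ω ∂μ +
          ∑ n ∈ Finset.range N, ∫ ω, {ω | n < σ ω}.indicator (X (n + 1) - X n) ω ∂μ := by
        rw [integral_add (hX 0) (integrable_finsetSum _ fun n _ => hterm n),
          integral_finsetSum _ fun n _ => hterm n]
    _ ≤ ∫ ω, X 0 ω ∂μ := add_le_of_nonpos_right (Finset.sum_nonpos fun n _ => hstep n)

theorem integral_le_stopped_of_le_condExp [IsFiniteMeasure μ] {X : ℕ → Ω → ℝ}
    (hX : ∀ n, Integrable (X n) μ) {σ : Ω → ℕ}
    (hσ : IsStoppingTime ℱ (fun ω => (σ ω : WithTop ℕ))) {N : ℕ} (hσN : ∀ ω, σ ω ≤ N)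
    (hXσ : ∀ n, ∀ᵐ ω ∂μ, n < σ ω → X n ω ≤ μ[X (n + 1) | ℱ n] ω) :
    ∫ ω, X 0 ω ∂μ ≤ ∫ ω, X (σ ω) ω ∂μ := by
  have h := integral_stopped_le_of_condExp_le (X := -X) (fun n => (hX n).neg) hσ hσN fun n => by
    filter_upwards [hXσ n, condExp_neg (X (n + 1)) (ℱ n)] with ω h hneg hn
    simpa [hneg] using h hn
  simpa [integral_neg] using h

theorem Measurable.apply_index {ι γ : Type*} [MeasurableSpace ι] [Countable ι]
    [MeasurableSingletonClass ι] [MeasurableSpace γ] {X : ι → Ω → γ} (hX : ∀ i, Measurable (X i))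
    {σ : Ω → ι} (hσ : Measurable σ) : Measurable fun ω => X (σ ω) ω :=
  (measurable_from_prod_countable_left (f := fun p : Ω × ι => X p.2 p.1) hX).comp
    (measurable_id.prodMk hσ)

theorem MeasureTheory.IsStoppingTime.measurable_nat {σ : Ω → ℕ}
    (hσ : IsStoppingTime ℱ (fun ω => (σ ω : WithTop ℕ))) : Measurable σ :=
  measurable_to_countable' fun n => ℱ.le n _ (by simpa [Set.preimage] using hσ.measurableSet_eq n)

namespace DynkinGame

noncomputable def value (μ : Measure Ω) (ℱ : Filtration ℕ m) (V1 V2 : ℕ → Ω → ℝ) (T t : ℕ) :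
    Ω → ℝ :=
  if t < T then fun ω => min (V2 t ω) (max (V1 t ω) (μ[value μ ℱ V1 V2 T (t + 1) | ℱ t] ω))
  else V1 t
termination_by T - t

def payoff (V1 V2 : ℕ → Ω → ℝ) (ρ τ : Ω → ℕ) (ω : Ω) : ℝ :=
  if τ ω ≤ ρ ω then V1 (τ ω) ω else V2 (ρ ω) ω

variable {V1 V2 : ℕ → Ω → ℝ} {T t : ℕ} {C : ℝ}

local notation "𝒱" => value μ ℱ V1 V2 T

theorem value_of_lt (ht : t < T) (ω : Ω) :
    𝒱 t ω = min (V2 t ω) (max (V1 t ω) (μ[𝒱 (t + 1) | ℱ t] ω)) := by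
  rw [value, if_pos ht]

theorem value_of_le (ht : T ≤ t) : 𝒱 t = V1 t := by
  rw [value, if_neg ht.not_gt]

theorem stronglyAdapted_value (h1 : StronglyAdapted ℱ V1) (h2 : StronglyAdapted ℱ V2) :
    StronglyAdapted ℱ 𝒱 := fun t => by
  rcases lt_or_ge t T with ht | ht
  · rw [funext (value_of_lt ht)]
    exact ((h2 t).measurable.min ((h1 t).measurable.max
      stronglyMeasurable_condExp.measurable)).stronglyMeasurable
  · rw [value_of_le ht]
    exact h1 t

theorem abs_value_le (hb : ∀ t ω, |V1 t ω| ≤ C ∧ |V2 t ω| ≤ C) (t : ℕ) (ω : Ω) :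
    |𝒱 t ω| ≤ C := by
  rcases lt_or_ge t T with ht | ht
  · rw [value_of_lt ht]
    have h1 := abs_le.1 (hb t ω).1
    have h2 := abs_le.1 (hb t ω).2
    exact abs_le.2 ⟨le_min h2.1 (h1.1.trans (le_max_left _ _)), (min_le_left _ _).trans h2.2⟩
  · rw [value_of_le ht]
    exact (hb t ω).1

theorem value_mem_Icc (h12 : ∀ t, V1 t ≤ᵐ[μ] V2 t) (t : ℕ) :
    ∀ᵐ ω ∂μ, 𝒱 t ω ∈ Set.Icc (V1 t ω) (V2 t ω) := by
  filter_upwards [h12 t] with ω hω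
  rcases lt_or_ge t T with ht | ht
  · rw [value_of_lt ht]
    exact ⟨le_min hω (le_max_left _ _), min_le_left _ _⟩
  · rw [value_of_le ht]
    exact ⟨le_rfl, hω⟩

theorem condExp_value_le (ht : t < T) {ω : Ω} (hω : 𝒱 t ω < V2 t ω) :
    μ[𝒱 (t + 1) | ℱ t] ω ≤ 𝒱 t ω := by
  rw [value_of_lt ht] at hω ⊢
  rw [min_eq_right ((min_lt_iff.1 hω).resolve_left (lt_irrefl _)).le]
  exact le_max_right _ _

theorem value_le_condExp (ht : t < T) {ω : Ω} (hω : V1 t ω < 𝒱 t ω) :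
    𝒱 t ω ≤ μ[𝒱 (t + 1) | ℱ t] ω := by
  rw [value_of_lt ht] at hω ⊢
  have hE : V1 t ω < μ[𝒱 (t + 1) | ℱ t] ω :=
    (lt_max_iff.1 (hω.trans_le (min_le_right _ _))).resolve_left (lt_irrefl _)
  rw [max_eq_right hE.le]
  exact min_le_right _ _

theorem ae_eq_value {V : ℕ → Ω → ℝ} (hVT : V T =ᵐ[μ] V1 T)
    (hVrec : ∀ t < T,
      V t =ᵐ[μ] fun ω => min (V2 t ω) (max (V1 t ω) ((μ[V (t + 1) | ℱ t]) ω)))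
    (ht : t ≤ T) : V t =ᵐ[μ] 𝒱 t := by
  induction ht using Nat.decreasingInduction with
  | self => rwa [value_of_le le_rfl]
  | of_succ t ht ih =>
    filter_upwards [hVrec t ht, condExp_congr_ae (m := ℱ t) ih] with ω h hcond
    rw [h, hcond, value_of_lt ht]

noncomputable def firstContact (μ : Measure Ω) (ℱ : Filtration ℕ m) (V1 V2 : ℕ → Ω → ℝ) (T : ℕ)
    (G : ℕ → Ω → ℝ) : Ω → ℕ :=
  hittingBtwn (value μ ℱ V1 V2 T - G) {0} 0 T

variable {G : ℕ → Ω → ℝ} {ω : Ω}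

theorem isStoppingTime_firstContact (h1 : StronglyAdapted ℱ V1) (h2 : StronglyAdapted ℱ V2)
    (hG : StronglyAdapted ℱ G) :
    IsStoppingTime ℱ (fun ω => (firstContact μ ℱ V1 V2 T G ω : WithTop ℕ)) :=
  ((stronglyAdapted_value h1 h2).sub hG).adapted.isStoppingTime_hittingBtwn
    (measurableSet_singleton 0)

theorem firstContact_le : firstContact μ ℱ V1 V2 T G ω ≤ T :=
  hittingBtwn_le ω

theorem value_ne_of_lt_firstContact (ht : t < firstContact μ ℱ V1 V2 T G ω) : 𝒱 t ω ≠ G t ω :=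
  fun he => notMem_of_lt_hittingBtwn ht (Nat.zero_le t) (by simp [he])

theorem value_firstContact (hT : 𝒱 T ω = G T ω) :
    𝒱 (firstContact μ ℱ V1 V2 T G ω) ω = G (firstContact μ ℱ V1 V2 T G ω) ω := by
  have h := hittingBtwn_mem_set (u := 𝒱 - G) (s := {0}) (ω := ω)
    ⟨T, ⟨Nat.zero_le T, le_rfl⟩, by simp [hT]⟩
  simpa [firstContact, sub_eq_zero] using h

theorem sInf_eq_firstContact {V : ℕ → Ω → ℝ} (hV : ∀ t ≤ T, V t ω = 𝒱 t ω)
    (hT : 𝒱 T ω = G T ω) : sInf {s | V s ω = G s ω} = firstContact μ ℱ V1 V2 T G ω := by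
  have hmem : T ∈ {s | V s ω = G s ω} := (hV T le_rfl).trans hT
  have hle : sInf {s | V s ω = G s ω} ≤ T := Nat.sInf_le hmem
  apply le_antisymm
  · exact Nat.sInf_le ((hV _ firstContact_le).trans (value_firstContact hT))
  · refine hittingBtwn_le_of_mem (Nat.zero_le _) hle ?_
    have h : V _ ω = G _ ω := Nat.sInf_mem ⟨T, hmem⟩
    simp [← hV _ hle, h]

theorem ae_sInf_eq_firstContact {V : ℕ → Ω → ℝ} (hVT : V T =ᵐ[μ] V1 T)
    (hVrec : ∀ t < T,
      V t =ᵐ[μ] fun ω => min (V2 t ω) (max (V1 t ω) ((μ[V (t + 1) | ℱ t]) ω)))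
    (hG : V1 T =ᵐ[μ] G T) :
    (fun ω => sInf {s | V s ω = G s ω}) =ᵐ[μ] firstContact μ ℱ V1 V2 T G := by
  have hV : ∀ᵐ ω ∂μ, ∀ t ≤ T, V t ω = 𝒱 t ω :=
    (ae_ball_iff (Set.to_countable (Set.Iic T))).2 fun _ ht => ae_eq_value hVT hVrec ht
  filter_upwards [hV, hG] with ω hω hωG
  exact sInf_eq_firstContact hω ((congrFun (value_of_le le_rfl) ω).trans hωG)

theorem integral_payoff_congr {ρ ρ' τ τ' : Ω → ℕ} (hρ : ρ =ᵐ[μ] ρ') (hτ : τ =ᵐ[μ] τ') :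
    ∫ ω, payoff V1 V2 ρ τ ω ∂μ = ∫ ω, payoff V1 V2 ρ' τ' ω ∂μ :=
  integral_congr_ae (by filter_upwards [hρ, hτ] with ω h h'; simp only [payoff, h, h'])

theorem abs_payoff_le (hb : ∀ t ω, |V1 t ω| ≤ C ∧ |V2 t ω| ≤ C) (ρ τ : Ω → ℕ) (ω : Ω) :
    |payoff V1 V2 ρ τ ω| ≤ C := by
  unfold payoff
  split_ifs
  exacts [(hb _ ω).1, (hb _ ω).2]

theorem abs_integral_payoff_le [IsProbabilityMeasure μ] (hb : ∀ t ω, |V1 t ω| ≤ C ∧ |V2 t ω| ≤ C)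
    (ρ τ : Ω → ℕ) : |∫ ω, payoff V1 V2 ρ τ ω ∂μ| ≤ C := by
  simpa using norm_integral_le_of_norm_le_const (μ := μ) (f := payoff V1 V2 ρ τ)
    (ae_of_all _ (abs_payoff_le hb ρ τ))

theorem integrable_payoff [IsFiniteMeasure μ] (h1 : StronglyAdapted ℱ V1)
    (h2 : StronglyAdapted ℱ V2) (hb : ∀ t ω, |V1 t ω| ≤ C ∧ |V2 t ω| ≤ C) {ρ τ : Ω → ℕ}
    (hρ : IsStoppingTime ℱ (fun ω => (ρ ω : WithTop ℕ)))
    (hτ : IsStoppingTime ℱ (fun ω => (τ ω : WithTop ℕ))) :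
    Integrable (payoff V1 V2 ρ τ) μ := by
  have hρm := hρ.measurable_nat
  have hτm := hτ.measurable_nat
  have hm : Measurable (payoff V1 V2 ρ τ) :=
    Measurable.ite (measurableSet_le hτm hρm)
      (Measurable.apply_index (fun t => ((h1 t).mono (ℱ.le t)).measurable) hτm)
      (Measurable.apply_index (fun t => ((h2 t).mono (ℱ.le t)).measurable) hρm)
  exact Integrable.of_bound hm.aestronglyMeasurable C (ae_of_all _ (abs_payoff_le hb ρ τ))

theorem integrable_value_apply [IsFiniteMeasure μ] (h1 : StronglyAdapted ℱ V1)
    (h2 : StronglyAdapted ℱ V2) (hb : ∀ t ω, |V1 t ω| ≤ C ∧ |V2 t ω| ≤ C) {σ : Ω → ℕ}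
    (hσ : Measurable σ) : Integrable (fun ω => 𝒱 (σ ω) ω) μ :=
  Integrable.of_bound
    (Measurable.apply_index (fun t => ((stronglyAdapted_value h1 h2 t).mono (ℱ.le t)).measurable)
      hσ).aestronglyMeasurable
    C (ae_of_all _ fun ω => abs_value_le hb _ ω)

theorem integral_payoff_le [IsFiniteMeasure μ] (h1 : StronglyAdapted ℱ V1)
    (h2 : StronglyAdapted ℱ V2) (hb : ∀ t ω, |V1 t ω| ≤ C ∧ |V2 t ω| ≤ C)
    (h12 : ∀ t, V1 t ≤ᵐ[μ] V2 t) (hT12 : V1 T =ᵐ[μ] V2 T) {τ : Ω → ℕ}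
    (hτ : IsStoppingTime ℱ (fun ω => (τ ω : WithTop ℕ))) (hτT : ∀ ω, τ ω ≤ T) :
    ∫ ω, payoff V1 V2 (firstContact μ ℱ V1 V2 T V2) τ ω ∂μ ≤ ∫ ω, 𝒱 0 ω ∂μ := by
  set ρ := firstContact μ ℱ V1 V2 T V2
  have hρ : IsStoppingTime ℱ (fun ω => (ρ ω : WithTop ℕ)) := isStoppingTime_firstContact h1 h2 h2
  have hσ : IsStoppingTime ℱ (fun ω => ((min (τ ω) (ρ ω) : ℕ) : WithTop ℕ)) := by
    exact_mod_cast hτ.min hρ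
  have hIcc := ae_all_iff.2 (value_mem_Icc (μ := μ) (ℱ := ℱ) (T := T) h12)
  calc ∫ ω, payoff V1 V2 ρ τ ω ∂μ ≤ ∫ ω, 𝒱 (min (τ ω) (ρ ω)) ω ∂μ := by
        refine integral_mono_ae (integrable_payoff h1 h2 hb hρ hτ)
          (integrable_value_apply h1 h2 hb hσ.measurable_nat) ?_
        filter_upwards [hIcc, hT12] with ω hω hωT
        unfold payoff
        split_ifs with h
        · rw [min_eq_left h]
          exact (hω _).1
        · rw [min_eq_right (not_le.1 h).le,
            value_firstContact ((congrFun (value_of_le le_rfl) ω).trans hωT)]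
    _ ≤ ∫ ω, 𝒱 0 ω ∂μ := by
        refine integral_stopped_le_of_condExp_le (X := 𝒱)
          (fun t => integrable_value_apply h1 h2 hb measurable_const) hσ
          (fun ω => (min_le_left _ _).trans (hτT ω)) fun t => ?_
        filter_upwards [hIcc] with ω hω ht
        have htρ : t < ρ ω := (lt_min_iff.1 ht).2
        exact condExp_value_le (htρ.trans_le firstContact_le)
          ((hω t).2.lt_of_ne (value_ne_of_lt_firstContact htρ))

theorem integral_value_le_payoff [IsFiniteMeasure μ] (h1 : StronglyAdapted ℱ V1)
    (h2 : StronglyAdapted ℱ V2) (hb : ∀ t ω, |V1 t ω| ≤ C ∧ |V2 t ω| ≤ C)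
    (h12 : ∀ t, V1 t ≤ᵐ[μ] V2 t) {ρ : Ω → ℕ}
    (hρ : IsStoppingTime ℱ (fun ω => (ρ ω : WithTop ℕ))) (hρT : ∀ ω, ρ ω ≤ T) :
    ∫ ω, 𝒱 0 ω ∂μ ≤ ∫ ω, payoff V1 V2 ρ (firstContact μ ℱ V1 V2 T V1) ω ∂μ := by
  set τ := firstContact μ ℱ V1 V2 T V1
  have hτ : IsStoppingTime ℱ (fun ω => (τ ω : WithTop ℕ)) := isStoppingTime_firstContact h1 h2 h1
  have hσ : IsStoppingTime ℱ (fun ω => ((min (τ ω) (ρ ω) : ℕ) : WithTop ℕ)) := by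
    exact_mod_cast hτ.min hρ
  have hIcc := ae_all_iff.2 (value_mem_Icc (μ := μ) (ℱ := ℱ) (T := T) h12)
  calc ∫ ω, 𝒱 0 ω ∂μ ≤ ∫ ω, 𝒱 (min (τ ω) (ρ ω)) ω ∂μ := by
        refine integral_le_stopped_of_le_condExp (X := 𝒱)
          (fun t => integrable_value_apply h1 h2 hb measurable_const) hσ
          (fun ω => (min_le_right _ _).trans (hρT ω)) fun t => ?_
        filter_upwards [hIcc] with ω hω ht
        have htτ : t < τ ω := (lt_min_iff.1 ht).1
        exact value_le_condExp (htτ.trans_le firstContact_le)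
          ((hω t).1.lt_of_ne (value_ne_of_lt_firstContact htτ).symm)
    _ ≤ ∫ ω, payoff V1 V2 ρ τ ω ∂μ := by
        refine integral_mono_ae (integrable_value_apply h1 h2 hb hσ.measurable_nat)
          (integrable_payoff h1 h2 hb hρ hτ) ?_
        filter_upwards [hIcc] with ω hω
        unfold payoff
        split_ifs with h
        · rw [min_eq_left h, value_firstContact (congrFun (value_of_le le_rfl) ω)]
        · rw [min_eq_right (not_le.1 h).le]
          exact (hω _).2

end DynkinGame

end

open DynkinGame in
/-- Discrete-time Dynkin game with payoffs `V¹ ≤ V²`, `V¹_T = V²_T`: the upper and lower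
values coincide, and `(ρ_d, τ_d)` given by the first hitting times of `{V = V²}` and
`{V = V¹}` (with `V` the backward-induction value process) is a saddle point. -/
theorem stmt_12 {Ω : Type*} {m : MeasurableSpace Ω} {μ : Measure Ω} [IsProbabilityMeasure μ]
    (ℱ : Filtration ℕ m) (T : ℕ)
    (V1 V2 V : ℕ → Ω → ℝ)
    (hadp1 : ∀ t, StronglyMeasurable[ℱ t] (V1 t))
    (hadp2 : ∀ t, StronglyMeasurable[ℱ t] (V2 t))
    (hbdd : ∃ C, ∀ t ω, |V1 t ω| ≤ C ∧ |V2 t ω| ≤ C)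
    (h12 : ∀ t, V1 t ≤ᵐ[μ] V2 t)
    (hT12 : V1 T =ᵐ[μ] V2 T)
    -- backward recursion for the value process V
    (hVT : V T =ᵐ[μ] V1 T)
    (hVrec : ∀ t < T,
      V t =ᵐ[μ] fun ω => min (V2 t ω) (max (V1 t ω) ((μ[V (t + 1) | ℱ t]) ω)))
    (ρd τd : Ω → ℕ)
    (hρd : ρd = fun ω => sInf {s | V s ω = V2 s ω})
    (hτd : τd = fun ω => sInf {s | V s ω = V1 s ω})
    (J : (Ω → ℕ) → (Ω → ℕ) → ℝ)
    (hJ : ∀ ρ τ, J ρ τ = ∫ ω, (if τ ω ≤ ρ ω then V1 (τ ω) ω else V2 (ρ ω) ω) ∂μ) :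
    (⨅ ρ : {σ : Ω → ℕ // IsStoppingTime ℱ (fun ω => (σ ω : WithTop ℕ)) ∧ ∀ ω, σ ω ≤ T},
        ⨆ τ : {σ : Ω → ℕ // IsStoppingTime ℱ (fun ω => (σ ω : WithTop ℕ)) ∧ ∀ ω, σ ω ≤ T}, J ρ.1 τ.1) =
      (⨆ τ : {σ : Ω → ℕ // IsStoppingTime ℱ (fun ω => (σ ω : WithTop ℕ)) ∧ ∀ ω, σ ω ≤ T},
        ⨅ ρ : {σ : Ω → ℕ // IsStoppingTime ℱ (fun ω => (σ ω : WithTop ℕ)) ∧ ∀ ω, σ ω ≤ T}, J ρ.1 τ.1) ∧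
    (∀ τ : Ω → ℕ, IsStoppingTime ℱ (fun ω => (τ ω : WithTop ℕ)) → (∀ ω, τ ω ≤ T) →
      J ρd τ ≤ ∫ ω, V 0 ω ∂μ) ∧
    (∀ ρ : Ω → ℕ, IsStoppingTime ℱ (fun ω => (ρ ω : WithTop ℕ)) → (∀ ω, ρ ω ≤ T) →
      ∫ ω, V 0 ω ∂μ ≤ J ρ τd) := by
  obtain ⟨C, hb⟩ := hbdd
  set ρ₀ := firstContact μ ℱ V1 V2 T V2
  set τ₀ := firstContact μ ℱ V1 V2 T V1
  have hv : ∫ ω, V 0 ω ∂μ = ∫ ω, value μ ℱ V1 V2 T 0 ω ∂μ :=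
    integral_congr_ae (ae_eq_value hVT hVrec (Nat.zero_le T))
  have hJρ : ∀ τ, J ρd τ = J ρ₀ τ := fun τ => by
    rw [hJ, hJ, hρd]
    exact integral_payoff_congr (ae_sInf_eq_firstContact hVT hVrec hT12) EventuallyEq.rfl
  have hJτ : ∀ ρ, J ρ τd = J ρ τ₀ := fun ρ => by
    rw [hJ, hJ, hτd]
    exact integral_payoff_congr EventuallyEq.rfl
      (ae_sInf_eq_firstContact hVT hVrec EventuallyEq.rfl)
  have hupper : ∀ τ : Ω → ℕ, IsStoppingTime ℱ (fun ω => (τ ω : WithTop ℕ)) → (∀ ω, τ ω ≤ T) →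
      J ρ₀ τ ≤ ∫ ω, V 0 ω ∂μ := fun τ hτ hτT => by
    rw [hJ, hv]
    exact integral_payoff_le hadp1 hadp2 hb h12 hT12 hτ hτT
  have hlower : ∀ ρ : Ω → ℕ, IsStoppingTime ℱ (fun ω => (ρ ω : WithTop ℕ)) → (∀ ω, ρ ω ≤ T) →
      ∫ ω, V 0 ω ∂μ ≤ J ρ τ₀ := fun ρ hρ hρT => by
    rw [hJ, hv]
    exact integral_value_le_payoff hadp1 hadp2 hb h12 hρ hρT
  refine ⟨ciInf_ciSup_eq_ciSup_ciInf_of_saddle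
      (fun ρ τ => by rw [hJ]; exact abs_integral_payoff_le hb ρ.1 τ.1)
      (a₀ := ⟨ρ₀, isStoppingTime_firstContact hadp1 hadp2 hadp2, fun _ => firstContact_le⟩)
      (b₀ := ⟨τ₀, isStoppingTime_firstContact hadp1 hadp2 hadp1, fun _ => firstContact_le⟩)
      (fun τ => hupper τ.1 τ.2.1 τ.2.2) (fun ρ => hlower ρ.1 ρ.2.1 ρ.2.2),
    fun τ hτ hτT => (hJρ τ).trans_le (hupper τ hτ hτT),
    fun ρ hρ hρT => (hlower ρ hρ hρT).trans_eq (hJτ ρ).symm⟩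
end

section
/- With ρ* the Type II strategy ρ*(τ) := ρ_d 1_{τ>ρ_d} + ρ_u(τ) 1_{τ≤ρ_d}, where (ρ_d,τ_d) is the Dynkin-game saddle point and ρ_u(t) optimizes V¹_t, one has sup_{τ∈𝒯} E[U(ρ*(τ),τ)] ≤ V; in particular the upper game value inf_{ρ∈𝕋^{ii}} sup_{τ∈𝒯} E[U(ρ(τ),τ)] ≤ V. -/
/-!
Fix a stopping time `τ` and split `Ω` according to who stops first under `ρ*(τ)`. On
`{τ = k ≤ ρ_d}`, an `ℱ_k`-event, `ρ*` answers with `ρ_u(k)`, and `E[U(ρ_u(k), k) | ℱ_k] = V¹_k`.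
On `{ρ_d = k < τ}`, also in `ℱ_k`, it stops at `k`, and `E[U(k, τ) | ℱ_k] ≤ S_k ≤ V²_k`. Summing
over `k` gives `E[U(ρ*(τ), τ)] ≤ E[V¹_τ 1_{τ ≤ ρ_d} + V²_{ρ_d} 1_{τ > ρ_d}] ≤ V` by the optimality
of `ρ_d`. This needs `S_k`, given only as an essential supremum, to be integrable: by the optimal
stopping argument it is `E[Y_{k+1} | ℱ_k]` for the Snell envelope `Y` of `U(k, ·)`. Finally `ρ*`
is non-anticipative, so it also bounds the upper value.
-/

open MeasureTheory Set

section CondExp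

variable {Ω : Type*} {m' m : MeasurableSpace Ω} {μ : Measure Ω} [IsFiniteMeasure μ] {f g : Ω → ℝ}

theorem condExp_piecewise_ae_eq (hm : m' ≤ m) {A : Set Ω} [DecidablePred (· ∈ A)]
    (hA : MeasurableSet[m'] A) (hf : StronglyMeasurable[m'] f) (hfi : Integrable f μ)
    (hg : Integrable g μ) :
    μ[A.piecewise f g|m'] =ᵐ[μ] A.piecewise f (μ[g|m']) := by
  rw [← indicator_add_compl_eq_piecewise, ← indicator_add_compl_eq_piecewise]
  refine (condExp_add (hfi.indicator (hm _ hA)) (hg.indicator (hm _ hA.compl)) m').trans ?_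
  rw [condExp_of_stronglyMeasurable hm (hf.indicator hA) (hfi.indicator (hm _ hA))]
  exact (condExp_indicator hg hA.compl).add_left

theorem ae_condExp_le_const (hm : m' ≤ m) (hf : Integrable f μ) {c : ℝ}
    (hfc : ∀ᵐ ω ∂μ, f ω ≤ c) : ∀ᵐ ω ∂μ, μ[f|m'] ω ≤ c := by
  have := condExp_mono (m := m') hf (integrable_const c) hfc
  rwa [condExp_const hm c] at this

theorem ae_le_const_of_ae_eq_condExp (hm : m' ≤ m) (hf : Integrable f μ) {c : ℝ}
    (hfc : ∀ᵐ ω ∂μ, f ω ≤ c) (hgf : g =ᵐ[μ] μ[f|m']) : ∀ᵐ ω ∂μ, g ω ≤ c := by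
  filter_upwards [hgf, ae_condExp_le_const hm hf hfc] with ω h h'
  exact h ▸ h'

theorem condExp_le_condExp_of_condExp_le {m₂ : MeasurableSpace Ω} (h₁₂ : m' ≤ m₂) (h₂ : m₂ ≤ m)
    (hg : Integrable g μ) (hfg : μ[f|m₂] ≤ᵐ[μ] g) : μ[f|m'] ≤ᵐ[μ] μ[g|m'] :=
  (condExp_condExp_of_le h₁₂ h₂).symm.le.trans (condExp_mono integrable_condExp hg hfg)

theorem condExp_ae_eq_condExp_of_condExp_ae_eq {m₂ : MeasurableSpace Ω} (h₁₂ : m' ≤ m₂)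
    (h₂ : m₂ ≤ m) (hfg : μ[f|m₂] =ᵐ[μ] g) : μ[f|m'] =ᵐ[μ] μ[g|m'] :=
  (condExp_condExp_of_le h₁₂ h₂).symm.trans (condExp_congr_ae hfg)

end CondExp

section

variable {Ω : Type*} {m : MeasurableSpace Ω} {ℱ : Filtration ℕ m}

namespace MeasureTheory.IsStoppingTime

variable {σ : Ω → ℕ}

theorem measurableSet_coe_eq (hσ : IsStoppingTime ℱ fun ω => (σ ω : WithTop ℕ)) (i : ℕ) :
    MeasurableSet[ℱ i] {ω | σ ω = i} := by
  simpa using hσ.measurableSet_eq_of_countable i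

theorem measurableSet_coe_le (hσ : IsStoppingTime ℱ fun ω => (σ ω : WithTop ℕ)) (i : ℕ) :
    MeasurableSet[ℱ i] {ω | σ ω ≤ i} := by
  simpa using hσ i

theorem measurableSet_coe_lt (hσ : IsStoppingTime ℱ fun ω => (σ ω : WithTop ℕ)) (i : ℕ) :
    MeasurableSet[ℱ i] {ω | σ ω < i} := by
  simpa using hσ.measurableSet_lt_of_countable i

theorem measurable_coe (hσ : IsStoppingTime ℱ fun ω => (σ ω : WithTop ℕ)) : Measurable σ :=
  measurable_to_countable' fun i => ℱ.le i _ (hσ.measurableSet_coe_eq i)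

theorem coe_max_const (hσ : IsStoppingTime ℱ fun ω => (σ ω : WithTop ℕ)) (i : ℕ) :
    IsStoppingTime ℱ fun ω => ((max (σ ω) i : ℕ) : WithTop ℕ) := by
  have hcast : (fun ω => ((max (σ ω) i : ℕ) : WithTop ℕ)) = fun ω => max (σ ω : WithTop ℕ) i :=
    funext fun _ => Nat.mono_cast.map_max
  exact hcast ▸ hσ.max_const i

end MeasureTheory.IsStoppingTime

theorem isStoppingTime_coe_of_measurableSet_eq {σ : Ω → ℕ}
    (hσ : ∀ i, MeasurableSet[ℱ i] {ω | σ ω = i}) :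
    IsStoppingTime ℱ fun ω => (σ ω : WithTop ℕ) :=
  isStoppingTime_of_measurableSet_eq fun i => by simpa using hσ i

section SnellEnvelope

variable {μ : Measure Ω} {X : ℕ → Ω → ℝ} {T a s : ℕ}

noncomputable def snellEnvelope (μ : Measure Ω) (ℱ : Filtration ℕ m) (X : ℕ → Ω → ℝ) (T : ℕ)
    (s : ℕ) : Ω → ℝ :=
  if s < T then X s ⊔ μ[snellEnvelope μ ℱ X T (s + 1)|ℱ s] else X T
termination_by T - s

theorem snellEnvelope_of_lt (h : s < T) :
    snellEnvelope μ ℱ X T s = X s ⊔ μ[snellEnvelope μ ℱ X T (s + 1)|ℱ s] := by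
  rw [snellEnvelope, if_pos h]

theorem snellEnvelope_self : snellEnvelope μ ℱ X T T = X T := by
  rw [snellEnvelope, if_neg (lt_irrefl T)]

theorem stronglyMeasurable_snellEnvelope (hX : ∀ n, a ≤ n → StronglyMeasurable[ℱ n] (X n))
    (ha : a ≤ s) (hs : s ≤ T) : StronglyMeasurable[ℱ s] (snellEnvelope μ ℱ X T s) := by
  rcases hs.lt_or_eq with hs | rfl
  · rw [snellEnvelope_of_lt hs]
    exact @StronglyMeasurable.sup _ _ _ _ (ℱ s) _ _ _ (hX s ha) stronglyMeasurable_condExp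
  · rw [snellEnvelope_self]
    exact hX s ha

theorem integrable_snellEnvelope (hXi : ∀ n, Integrable (X n) μ) (s : ℕ) :
    Integrable (snellEnvelope μ ℱ X T s) μ := by
  by_cases hs : s < T
  · rw [snellEnvelope_of_lt hs]
    exact (hXi s).sup integrable_condExp
  · rw [snellEnvelope, if_neg hs]
    exact hXi T

theorem integrable_apply_of_isStoppingTime (hXi : ∀ n, Integrable (X n) μ) {τ : Ω → ℕ}
    (hτ : IsStoppingTime ℱ fun ω => (τ ω : WithTop ℕ)) (hτT : ∀ ω, τ ω ≤ T) :
    Integrable (fun ω => X (τ ω) ω) μ :=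
  integrable_stoppedValue ℕ hτ hXi (N := T) fun ω => by simpa using hτT ω

variable [IsFiniteMeasure μ]

theorem condExp_le_snellEnvelope (hX : ∀ n, a ≤ n → StronglyMeasurable[ℱ n] (X n))
    (hXi : ∀ n, Integrable (X n) μ) (ha : a ≤ s) (hs : s ≤ T) {τ : Ω → ℕ}
    (hτ : IsStoppingTime ℱ fun ω => (τ ω : WithTop ℕ)) (hτs : ∀ ω, s ≤ τ ω ∧ τ ω ≤ T) :
    μ[fun ω => X (τ ω) ω|ℱ s] ≤ᵐ[μ] snellEnvelope μ ℱ X T s := by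
  induction hs using Nat.decreasingInduction generalizing τ with
  | self =>
    have hXτ : (fun ω => X (τ ω) ω) = X T :=
      funext fun ω => by rw [le_antisymm (hτs ω).2 (hτs ω).1]
    rw [hXτ, snellEnvelope_self, condExp_of_stronglyMeasurable (ℱ.le T) (hX T ha) (hXi T)]
  | of_succ s hs ih =>
    set τ' : Ω → ℕ := fun ω => max (τ ω) (s + 1)
    have hτ' : IsStoppingTime ℱ fun ω => (τ' ω : WithTop ℕ) := hτ.coe_max_const (s + 1)
    have hτ's : ∀ ω, s + 1 ≤ τ' ω ∧ τ' ω ≤ T :=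
      fun ω => ⟨le_max_right _ _, max_le (hτs ω).2 hs⟩
    have hXτ : (fun ω => X (τ ω) ω) = {ω | τ ω = s}.piecewise (X s) fun ω => X (τ' ω) ω := by
      funext ω
      by_cases h : τ ω = s
      · simp [h]
      · have : τ' ω = τ ω := max_eq_left (by have := (hτs ω).1; omega)
        simp [h, this]
    have hcont : μ[fun ω => X (τ' ω) ω|ℱ s] ≤ᵐ[μ] μ[snellEnvelope μ ℱ X T (s + 1)|ℱ s] :=
      condExp_le_condExp_of_condExp_le (ℱ.mono s.le_succ) (ℱ.le _)
        (integrable_snellEnvelope hXi _) (ih (ha.trans s.le_succ) hτ' hτ's)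
    rw [hXτ, snellEnvelope_of_lt hs]
    filter_upwards [condExp_piecewise_ae_eq (ℱ.le s) (hτ.measurableSet_coe_eq s) (hX s ha)
      (hXi s) (integrable_apply_of_isStoppingTime hXi hτ' fun ω => (hτ's ω).2), hcont]
      with ω hω hcontω
    rw [hω]
    by_cases h : τ ω = s
    · simp [h]
    · simpa [h] using Or.inr hcontω

theorem exists_condExp_eq_snellEnvelope (hX : ∀ n, a ≤ n → StronglyMeasurable[ℱ n] (X n))
    (hXi : ∀ n, Integrable (X n) μ) (ha : a ≤ s) (hs : s ≤ T) :
    ∃ τ : Ω → ℕ, IsStoppingTime ℱ (fun ω => (τ ω : WithTop ℕ)) ∧ (∀ ω, s ≤ τ ω ∧ τ ω ≤ T) ∧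
      μ[fun ω => X (τ ω) ω|ℱ s] =ᵐ[μ] snellEnvelope μ ℱ X T s := by
  induction hs using Nat.decreasingInduction with
  | self =>
    refine ⟨fun _ => T, isStoppingTime_const ℱ T, fun _ => ⟨le_rfl, le_rfl⟩, ?_⟩
    rw [snellEnvelope_self, condExp_of_stronglyMeasurable (ℱ.le T) (hX T ha) (hXi T)]
  | of_succ s hs ih =>
    obtain ⟨τ₁, hτ₁, hτ₁s, hτ₁eq⟩ := ih (ha.trans s.le_succ)
    -- stop as soon as the envelope touches the payoff
    set A := {ω | snellEnvelope μ ℱ X T s ω = X s ω}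
    have hA : MeasurableSet[ℱ s] A :=
      measurableSet_eq_fun (stronglyMeasurable_snellEnvelope hX ha hs.le).measurable
        (hX s ha).measurable
    refine ⟨A.piecewise (fun _ => s) τ₁, ?_, fun ω => ?_, ?_⟩
    · have hcast : (fun ω => ((A.piecewise (fun _ => s) τ₁ ω : ℕ) : WithTop ℕ)) =
          A.piecewise (fun _ => (s : WithTop ℕ)) fun ω => (τ₁ ω : WithTop ℕ) := by
        funext ω
        by_cases h : ω ∈ A <;> simp [h]
      rw [hcast]
      exact (isStoppingTime_const ℱ s).piecewise_of_le hτ₁ (fun _ => le_rfl)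
        (fun ω => WithTop.coe_le_coe.2 ((hτ₁s ω).1.trans' s.le_succ)) hA
    · by_cases h : ω ∈ A
      · simp [h, hs.le]
      · simp only [h, not_false_eq_true, piecewise_eq_of_notMem]
        exact ⟨s.le_succ.trans (hτ₁s ω).1, (hτ₁s ω).2⟩
    · have hXτ : (fun ω => X (A.piecewise (fun _ => s) τ₁ ω) ω) =
          A.piecewise (X s) fun ω => X (τ₁ ω) ω := by
        funext ω
        by_cases h : ω ∈ A <;> simp [h]
      have hcont : μ[fun ω => X (τ₁ ω) ω|ℱ s] =ᵐ[μ] μ[snellEnvelope μ ℱ X T (s + 1)|ℱ s] :=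
        condExp_ae_eq_condExp_of_condExp_ae_eq (ℱ.mono s.le_succ) (ℱ.le _) hτ₁eq
      rw [hXτ]
      filter_upwards [condExp_piecewise_ae_eq (ℱ.le s) hA (hX s ha) (hXi s)
        (integrable_apply_of_isStoppingTime hXi hτ₁ fun ω => (hτ₁s ω).2), hcont]
        with ω hω hcontω
      rw [hω]
      by_cases h : ω ∈ A
      · simpa [h] using h.symm
      · have hsnell := congrFun (snellEnvelope_of_lt (μ := μ) (ℱ := ℱ) (X := X) hs) ω
        simp only [h, not_false_eq_true, piecewise_eq_of_notMem, hcontω]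
        simp only [Pi.sup_apply] at hsnell
        rcases max_choice (X s ω) (μ[snellEnvelope μ ℱ X T (s + 1)|ℱ s] ω) with hmax | hmax
        · exact absurd (hsnell.trans hmax) h
        · exact (hsnell.trans hmax).symm

theorem ae_eq_condExp_snellEnvelope
    (hX : ∀ n, a ≤ n → StronglyMeasurable[ℱ n] (X n)) (hXi : ∀ n, Integrable (X n) μ) {r : ℕ}
    (hsr : s ≤ r) (ha : a ≤ r) (hr : r ≤ T) {Z : Ω → ℝ}
    (hge : ∀ τ : Ω → ℕ, IsStoppingTime ℱ (fun ω => (τ ω : WithTop ℕ)) →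
      (∀ ω, r ≤ τ ω ∧ τ ω ≤ T) → μ[fun ω => X (τ ω) ω|ℱ s] ≤ᵐ[μ] Z)
    (hleast : ∀ W : Ω → ℝ, (∀ τ : Ω → ℕ, IsStoppingTime ℱ (fun ω => (τ ω : WithTop ℕ)) →
      (∀ ω, r ≤ τ ω ∧ τ ω ≤ T) → μ[fun ω => X (τ ω) ω|ℱ s] ≤ᵐ[μ] W) → Z ≤ᵐ[μ] W) :
    Z =ᵐ[μ] μ[snellEnvelope μ ℱ X T r|ℱ s] := by
  refine (hleast _ fun τ hτ hτr => ?_).antisymm ?_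
  · exact condExp_le_condExp_of_condExp_le (ℱ.mono hsr) (ℱ.le r) (integrable_snellEnvelope hXi r)
      (condExp_le_snellEnvelope hX hXi ha hr hτ hτr)
  · obtain ⟨τ, hτ, hτr, hτeq⟩ := exists_condExp_eq_snellEnvelope hX hXi ha hr
    exact (condExp_ae_eq_condExp_of_condExp_ae_eq (ℱ.mono hsr) (ℱ.le r) hτeq).symm.le.trans
      (hge τ hτ hτr)

end SnellEnvelope

section IntegralLEOn

variable {μ : Measure Ω} {f g : Ω → ℝ} {s t : Set Ω}

def IntegralLEOn (μ : Measure Ω) (s : Set Ω) (f g : Ω → ℝ) : Prop :=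
  IntegrableOn f s μ ∧ IntegrableOn g s μ ∧ ∫ ω in s, f ω ∂μ ≤ ∫ ω in s, g ω ∂μ

theorem IntegralLEOn.union (hs : IntegralLEOn μ s f g) (ht : IntegralLEOn μ t f g)
    (hst : Disjoint s t) (htm : MeasurableSet t) : IntegralLEOn μ (s ∪ t) f g := by
  refine ⟨hs.1.union ht.1, hs.2.1.union ht.2.1, ?_⟩
  rw [setIntegral_union hst htm hs.1 ht.1, setIntegral_union hst htm hs.2.1 ht.2.1]
  exact add_le_add hs.2.2 ht.2.2

theorem IntegralLEOn.of_levelSets {θ : Ω → ℕ} (hθ : Measurable θ) (hs : MeasurableSet s) {N : ℕ}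
    (hθN : ∀ ω ∈ s, θ ω < N) (h : ∀ k < N, IntegralLEOn μ ({ω | θ ω = k} ∩ s) f g) :
    IntegralLEOn μ s f g := by
  have hcover : s = ⋃ k ∈ Finset.range N, {ω | θ ω = k} ∩ s := by
    ext ω
    simp only [mem_iUnion, mem_inter_iff, mem_ofPred_eq, Finset.mem_range, exists_prop]
    exact ⟨fun hω => ⟨θ ω, hθN ω hω, rfl, hω⟩, fun ⟨_, _, _, hω⟩ => hω⟩
  have hmeas : ∀ k ∈ Finset.range N, MeasurableSet ({ω | θ ω = k} ∩ s) :=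
    fun k _ => (hθ (measurableSet_singleton k)).inter hs
  have hdisj : (Finset.range N : Set ℕ).Pairwise
      (Function.onFun Disjoint fun k => {ω | θ ω = k} ∩ s) :=
    fun i _ j _ hij => disjoint_left.2 fun ω hi hj => hij (hi.1.symm.trans hj.1)
  have h' : ∀ k ∈ Finset.range N, IntegralLEOn μ ({ω | θ ω = k} ∩ s) f g :=
    fun k hk => h k (Finset.mem_range.1 hk)
  rw [hcover]
  refine ⟨(integrableOn_finset_iUnion).2 fun k hk => (h' k hk).1,
    (integrableOn_finset_iUnion).2 fun k hk => (h' k hk).2.1, ?_⟩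
  rw [integral_biUnion_finset _ hmeas hdisj fun k hk => (h' k hk).1,
    integral_biUnion_finset _ hmeas hdisj fun k hk => (h' k hk).2.1]
  exact Finset.sum_le_sum fun k hk => (h' k hk).2.2

theorem integralLEOn_of_condExp_le {m' : MeasurableSpace Ω} [IsFiniteMeasure μ] (hm : m' ≤ m)
    {F G : Ω → ℝ} (hF : Integrable F μ) (hG : Integrable G μ) (hFG : μ[F|m'] ≤ᵐ[μ] G)
    (hs : MeasurableSet[m'] s) (hfF : EqOn f F s) (hgG : EqOn g G s) : IntegralLEOn μ s f g := by
  refine ⟨hF.integrableOn.congr_fun hfF.symm (hm _ hs),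
    hG.integrableOn.congr_fun hgG.symm (hm _ hs), ?_⟩
  rw [setIntegral_congr_fun (hm _ hs) hfF, setIntegral_congr_fun (hm _ hs) hgG,
    ← setIntegral_condExp hm hF hs]
  exact setIntegral_mono_ae integrable_condExp.integrableOn hG.integrableOn hFG

end IntegralLEOn

section Strategy

theorem isStoppingTime_coe_apply {σ : Ω → ℕ} (hσ : IsStoppingTime ℱ fun ω => (σ ω : WithTop ℕ))
    {N : ℕ} (hσN : ∀ ω, σ ω ≤ N) {ρ : ℕ → Ω → ℕ}
    (hρ : ∀ k ≤ N, IsStoppingTime ℱ fun ω => (ρ k ω : WithTop ℕ))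
    (hρk : ∀ k ≤ N, ∀ ω, k ≤ ρ k ω) :
    IsStoppingTime ℱ fun ω => (ρ (σ ω) ω : WithTop ℕ) := by
  refine isStoppingTime_coe_of_measurableSet_eq fun n => ?_
  have hset : {ω | ρ (σ ω) ω = n} =
      ⋃ k ∈ Finset.range (min n N + 1), {ω | σ ω = k} ∩ {ω | ρ k ω = n} := by
    ext ω
    simp only [mem_ofPred_eq, mem_iUnion, mem_inter_iff, Finset.mem_range, exists_prop]
    refine ⟨fun h => ⟨σ ω, ?_, rfl, h⟩, fun ⟨k, _, hk, h⟩ => hk ▸ h⟩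
    have := hρk (σ ω) (hσN ω) ω
    have := hσN ω
    omega
  rw [hset]
  refine Finset.measurableSet_biUnion _ fun k hk => ?_
  have hk : k ≤ n ∧ k ≤ N := by simp only [Finset.mem_range] at hk; omega
  exact (ℱ.mono hk.1 _ (hσ.measurableSet_coe_eq k)).inter ((hρ k hk.2).measurableSet_coe_eq n)

theorem isStoppingTime_coe_ite_lt {σ ρ η : Ω → ℕ}
    (hσ : IsStoppingTime ℱ fun ω => (σ ω : WithTop ℕ))
    (hρ : IsStoppingTime ℱ fun ω => (ρ ω : WithTop ℕ))
    (hη : IsStoppingTime ℱ fun ω => (η ω : WithTop ℕ)) (hση : ∀ ω, σ ω ≤ η ω) :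
    IsStoppingTime ℱ fun ω => ((if ρ ω < σ ω then ρ ω else η ω : ℕ) : WithTop ℕ) := by
  refine isStoppingTime_coe_of_measurableSet_eq fun n => ?_
  have hle : MeasurableSet[ℱ n] ({ω | σ ω ≤ ρ ω} ∩ {ω | σ ω ≤ n}) := by
    simpa using ((hσ.measurableSet _).1 (hσ.measurableSet_le_stopping_time hρ)).2 n
  have hset : {ω | (if ρ ω < σ ω then ρ ω else η ω) = n} =
      {ω | ρ ω = n} ∩ {ω | σ ω ≤ n}ᶜ ∪ {ω | η ω = n} ∩ ({ω | σ ω ≤ ρ ω} ∩ {ω | σ ω ≤ n}) := by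
    ext ω
    have := hση ω
    simp only [mem_ofPred_eq, mem_union, mem_inter_iff, mem_compl_iff]
    split_ifs <;> omega
  rw [hset]
  exact ((hρ.measurableSet_coe_eq n).inter (hσ.measurableSet_coe_le n).compl).union
    ((hη.measurableSet_coe_eq n).inter hle)

end Strategy

section DynkinGame

/-- The paper's strategy `ρ*`. -/
def strategy (ρd : Ω → ℕ) (ρu : ℕ → Ω → ℕ) (τ : Ω → ℕ) : Ω → ℕ :=
  fun ω => if ρd ω < τ ω then ρd ω else ρu (τ ω) ω

def dynkinPayoff (V1 V2 : ℕ → Ω → ℝ) (ρ τ : Ω → ℕ) : Ω → ℝ :=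
  fun ω => if τ ω ≤ ρ ω then V1 (τ ω) ω else V2 (ρ ω) ω

variable {μ : Measure Ω} {T k : ℕ} {U : ℕ → ℕ → Ω → ℝ} {S V1 V2 : ℕ → Ω → ℝ}
  {ρu : ℕ → Ω → ℕ} {ρd τ : Ω → ℕ}

theorem isStoppingTime_strategy (hρd : IsStoppingTime ℱ fun ω => (ρd ω : WithTop ℕ))
    (hρdT : ∀ ω, ρd ω ≤ T)
    (hρu : ∀ t ≤ T, IsStoppingTime ℱ (fun ω => (ρu t ω : WithTop ℕ)) ∧
      ∀ ω, t ≤ ρu t ω ∧ ρu t ω ≤ T)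
    (hτ : IsStoppingTime ℱ fun ω => (τ ω : WithTop ℕ)) (hτT : ∀ ω, τ ω ≤ T) :
    IsStoppingTime ℱ (fun ω => (strategy ρd ρu τ ω : WithTop ℕ)) ∧
      ∀ ω, strategy ρd ρu τ ω ≤ T := by
  refine ⟨isStoppingTime_coe_ite_lt hτ hρd (isStoppingTime_coe_apply hτ hτT
    (fun t ht => (hρu t ht).1) fun t ht ω => ((hρu t ht).2 ω).1)
    fun ω => ((hρu _ (hτT ω)).2 ω).1, fun ω => ?_⟩
  have := hρdT ω
  have := ((hρu _ (hτT ω)).2 ω).2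
  unfold strategy
  split_ifs <;> omega

theorem strategy_nonanticipative {σ₁ σ₂ : Ω → ℕ} {ω : Ω} (h₁ : σ₁ ω ≤ ρu (σ₁ ω) ω)
    (h₂ : σ₂ ω ≤ ρu (σ₂ ω) ω) :
    (strategy ρd ρu σ₁ ω = strategy ρd ρu σ₂ ω ∧
        strategy ρd ρu σ₁ ω < min (σ₁ ω) (σ₂ ω)) ∨
      min (σ₁ ω) (σ₂ ω) ≤ min (strategy ρd ρu σ₁ ω) (strategy ρd ρu σ₂ ω) := by
  unfold strategy
  split_ifs <;> omega

variable [IsFiniteMeasure μ]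

theorem integralLEOn_dynkinPayoff_of_tau_le (hU : ∀ s, Integrable (U s k) μ)
    (hρu : IsStoppingTime ℱ (fun ω => (ρu k ω : WithTop ℕ)) ∧ ∀ ω, k ≤ ρu k ω ∧ ρu k ω ≤ T)
    (hV1 : V1 k =ᵐ[μ] μ[fun ω => U (ρu k ω) k ω|ℱ k])
    (hρd : IsStoppingTime ℱ fun ω => (ρd ω : WithTop ℕ))
    (hτ : IsStoppingTime ℱ fun ω => (τ ω : WithTop ℕ)) :
    IntegralLEOn μ ({ω | τ ω = k} ∩ {ω | τ ω ≤ ρd ω}) (fun ω => U (strategy ρd ρu τ ω) (τ ω) ω)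
      (dynkinPayoff V1 V2 ρd τ) := by
  have hset : {ω | τ ω = k} ∩ {ω | τ ω ≤ ρd ω} = {ω | τ ω = k} ∩ {ω | ρd ω < k}ᶜ := by
    ext ω
    simp only [mem_inter_iff, mem_ofPred_eq, mem_compl_iff, not_lt]
    exact ⟨fun ⟨h, h'⟩ => ⟨h, h ▸ h'⟩, fun ⟨h, h'⟩ => ⟨h, h ▸ h'⟩⟩
  refine integralLEOn_of_condExp_le (ℱ.le k)
    (integrable_apply_of_isStoppingTime (X := fun n => U n k) hU hρu.1 fun ω => (hρu.2 ω).2)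
    (integrable_condExp.congr hV1.symm) hV1.symm.le
    (hset ▸ (hτ.measurableSet_coe_eq k).inter (hρd.measurableSet_coe_lt k).compl)
    (fun ω ⟨h, h'⟩ => ?_) fun ω ⟨h, h'⟩ => ?_
  · simp only [mem_ofPred_eq] at h h'
    rw [strategy, if_neg (not_lt.2 h'), h]
  · simp only [mem_ofPred_eq] at h h'
    rw [dynkinPayoff, if_pos h', h]

theorem integralLEOn_dynkinPayoff_of_rho_lt (hU : ∀ t, Integrable (U k t) μ)
    (hS : ∀ τ : Ω → ℕ, IsStoppingTime ℱ (fun ω => (τ ω : WithTop ℕ)) →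
      (∀ ω, k + 1 ≤ τ ω ∧ τ ω ≤ T) → μ[fun ω => U k (τ ω) ω|ℱ k] ≤ᵐ[μ] S k)
    (hSi : Integrable (S k) μ) (hV1i : Integrable (V1 k) μ)
    (hV2 : ∀ ω, V2 k ω = max (S k ω) (V1 k ω))
    (hρd : IsStoppingTime ℱ fun ω => (ρd ω : WithTop ℕ))
    (hτ : IsStoppingTime ℱ fun ω => (τ ω : WithTop ℕ)) (hτT : ∀ ω, τ ω ≤ T) (hk : k < T) :
    IntegralLEOn μ ({ω | ρd ω = k} ∩ {ω | τ ω ≤ ρd ω}ᶜ)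
      (fun ω => U (strategy ρd ρu τ ω) (τ ω) ω) (dynkinPayoff V1 V2 ρd τ) := by
  have hset : {ω | ρd ω = k} ∩ {ω | τ ω ≤ ρd ω}ᶜ = {ω | ρd ω = k} ∩ {ω | τ ω ≤ k}ᶜ := by
    ext ω
    simp only [mem_inter_iff, mem_ofPred_eq, mem_compl_iff]
    exact ⟨fun ⟨h, h'⟩ => ⟨h, h ▸ h'⟩, fun ⟨h, h'⟩ => ⟨h, h ▸ h'⟩⟩
  have hτ' : IsStoppingTime ℱ fun ω => ((max (τ ω) (k + 1) : ℕ) : WithTop ℕ) :=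
    hτ.coe_max_const (k + 1)
  have hτ'b : ∀ ω, k + 1 ≤ max (τ ω) (k + 1) ∧ max (τ ω) (k + 1) ≤ T :=
    fun ω => ⟨le_max_right _ _, max_le (hτT ω) hk⟩
  refine integralLEOn_of_condExp_le (ℱ.le k)
    (integrable_apply_of_isStoppingTime hU hτ' fun ω => (hτ'b ω).2)
    (funext hV2 ▸ hSi.sup hV1i : Integrable (V2 k) μ)
    ((hS _ hτ' hτ'b).trans (.of_forall fun ω => (hV2 ω).symm ▸ le_max_left _ _))
    (hset ▸ (hρd.measurableSet_coe_eq k).inter (hτ.measurableSet_coe_le k).compl)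
    (fun ω ⟨h, h'⟩ => ?_) fun ω ⟨h, h'⟩ => ?_
  · simp only [mem_ofPred_eq, mem_compl_iff, not_le] at h h'
    rw [strategy, if_pos h', h, max_eq_left (h ▸ h' : k + 1 ≤ τ ω)]
  · simp only [mem_ofPred_eq, mem_compl_iff, not_le] at h h'
    rw [dynkinPayoff, if_neg (not_le.2 h'), h]

theorem integrable_dynkinPayoff_and_integral_le (hU : ∀ s t, Integrable (U s t) μ)
    (hρu : ∀ t ≤ T, IsStoppingTime ℱ (fun ω => (ρu t ω : WithTop ℕ)) ∧
      ∀ ω, t ≤ ρu t ω ∧ ρu t ω ≤ T)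
    (hV1 : ∀ t ≤ T, V1 t =ᵐ[μ] μ[fun ω => U (ρu t ω) t ω|ℱ t])
    (hS : ∀ t < T, ∀ τ : Ω → ℕ, IsStoppingTime ℱ (fun ω => (τ ω : WithTop ℕ)) →
      (∀ ω, t + 1 ≤ τ ω ∧ τ ω ≤ T) → μ[fun ω => U t (τ ω) ω|ℱ t] ≤ᵐ[μ] S t)
    (hSi : ∀ t < T, Integrable (S t) μ) (hV2 : ∀ t < T, ∀ ω, V2 t ω = max (S t ω) (V1 t ω))
    (hρd : IsStoppingTime ℱ fun ω => (ρd ω : WithTop ℕ))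
    (hτ : IsStoppingTime ℱ fun ω => (τ ω : WithTop ℕ)) (hτT : ∀ ω, τ ω ≤ T) :
    Integrable (dynkinPayoff V1 V2 ρd τ) μ ∧
      ∫ ω, U (strategy ρd ρu τ ω) (τ ω) ω ∂μ ≤ ∫ ω, dynkinPayoff V1 V2 ρd τ ω ∂μ := by
  have hE : MeasurableSet {ω | τ ω ≤ ρd ω} :=
    measurableSet_le hτ.measurable_coe hρd.measurable_coe
  have hall := (IntegralLEOn.of_levelSets hτ.measurable_coe hE
    (fun ω _ => Nat.lt_succ_of_le (hτT ω)) fun k hk =>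
      integralLEOn_dynkinPayoff_of_tau_le (fun s => hU s k) (hρu k (Nat.lt_succ_iff.1 hk))
        (hV1 k (Nat.lt_succ_iff.1 hk)) hρd hτ).union
    (IntegralLEOn.of_levelSets hρd.measurable_coe hE.compl
      (fun ω hω => (not_le.1 (show ¬τ ω ≤ ρd ω from hω)).trans_le (hτT ω)) fun k hk =>
        integralLEOn_dynkinPayoff_of_rho_lt (hU k) (hS k hk) (hSi k hk)
          (integrable_condExp.congr (hV1 k hk.le).symm) (hV2 k hk) hρd hτ hτT hk)
    disjoint_compl_right hE.compl
  simp only [union_compl_self, IntegralLEOn, integrableOn_univ, setIntegral_univ] at hall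
  exact hall.2

theorem integral_dynkinPayoff_le [IsProbabilityMeasure μ] {C : ℝ}
    (hV1 : ∀ t ≤ T, ∀ᵐ ω ∂μ, V1 t ω ≤ C) (hS : ∀ t < T, ∀ᵐ ω ∂μ, S t ω ≤ C)
    (hV2 : ∀ t < T, ∀ ω, V2 t ω = max (S t ω) (V1 t ω)) (hτT : ∀ ω, τ ω ≤ T)
    (hint : Integrable (dynkinPayoff V1 V2 ρd τ) μ) : ∫ ω, dynkinPayoff V1 V2 ρd τ ω ∂μ ≤ C := by
  have hV1' : ∀ᵐ ω ∂μ, ∀ t, t ≤ T → V1 t ω ≤ C := ae_all_iff.2 fun t => by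
    by_cases ht : t ≤ T
    · filter_upwards [hV1 t ht] with ω h _ using h
    · exact .of_forall fun _ h => absurd h ht
  have hS' : ∀ᵐ ω ∂μ, ∀ t, t < T → S t ω ≤ C := ae_all_iff.2 fun t => by
    by_cases ht : t < T
    · filter_upwards [hS t ht] with ω h _ using h
    · exact .of_forall fun _ h => absurd h ht
  refine (integral_mono_ae hint (integrable_const C) ?_).trans_eq (by simp)
  filter_upwards [hV1', hS'] with ω h1 h2
  unfold dynkinPayoff
  split_ifs with h
  · exact h1 _ (hτT ω)
  · have hρdT := (not_le.1 h).trans_le (hτT ω)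
    exact (hV2 _ hρdT ω).trans_le (max_le (h2 _ hρdT) (h1 _ hρdT.le))

end DynkinGame

theorem abs_integral_le_of_abs_le {μ : Measure Ω} [IsProbabilityMeasure μ] {f : Ω → ℝ} {C : ℝ}
    (hf : ∀ ω, |f ω| ≤ C) : |∫ ω, f ω ∂μ| ≤ C := by
  simpa using norm_integral_le_of_norm_le_const (μ := μ)
    (.of_forall fun ω => (Real.norm_eq_abs _).trans_le (hf ω))

theorem ciInf_ciSup_le_ciSup {ι κ : Type*} {F : ι → κ → ℝ} {C : ℝ}
    (hF : ∀ i j, |F i j| ≤ C) (j₀ : κ) (i : ι) : ⨅ i, ⨆ j, F i j ≤ ⨆ j, F i j := by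
  refine ciInf_le ⟨-C, ?_⟩ i
  rintro _ ⟨i', rfl⟩
  refine le_ciSup_of_le ⟨C, ?_⟩ j₀ (abs_le.1 (hF i' _)).1
  rintro _ ⟨j, rfl⟩
  exact (abs_le.1 (hF i' j)).2

end

theorem stmt_14_general {Ω : Type*} {m : MeasurableSpace Ω} {μ : Measure Ω} [IsProbabilityMeasure μ]
    (ℱ : Filtration ℕ m) (T : ℕ)
    (U : ℕ → ℕ → Ω → ℝ)
    (hUmeas : ∀ s t, StronglyMeasurable[ℱ (max s t)] (U s t))
    (hUbdd : ∃ C, ∀ s t ω, |U s t ω| ≤ C)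
    (𝒯 : Set (Ω → ℕ))
    (h𝒯 : 𝒯 = {σ | IsStoppingTime ℱ (fun ω => (σ ω : WithTop ℕ)) ∧ ∀ ω, σ ω ≤ T})
    (V1 S V2 : ℕ → Ω → ℝ)
    (hSge : ∀ t < T, ∀ τ : Ω → ℕ, IsStoppingTime ℱ (fun ω => (τ ω : WithTop ℕ)) → (∀ ω, t + 1 ≤ τ ω ∧ τ ω ≤ T) →
      μ[fun ω => U t (τ ω) ω | ℱ t] ≤ᵐ[μ] S t)
    (hSleast : ∀ t < T, ∀ Z : Ω → ℝ,
      (∀ τ : Ω → ℕ, IsStoppingTime ℱ (fun ω => (τ ω : WithTop ℕ)) → (∀ ω, t + 1 ≤ τ ω ∧ τ ω ≤ T) →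
        μ[fun ω => U t (τ ω) ω | ℱ t] ≤ᵐ[μ] Z) → S t ≤ᵐ[μ] Z)
    (hV2 : ∀ t < T, ∀ ω, V2 t ω = max (S t ω) (V1 t ω))
    (TypeII : ((Ω → ℕ) → Ω → ℕ) → Prop)
    (hTypeII : ∀ ρ, TypeII ρ ↔ ((∀ σ ∈ 𝒯, ρ σ ∈ 𝒯) ∧ ∀ σ₁ ∈ 𝒯, ∀ σ₂ ∈ 𝒯, ∀ ω,
      (ρ σ₁ ω = ρ σ₂ ω ∧ ρ σ₁ ω < min (σ₁ ω) (σ₂ ω)) ∨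
        min (σ₁ ω) (σ₂ ω) ≤ min (ρ σ₁ ω) (ρ σ₂ ω)))
    -- the Dynkin game value V and its optimal ρ_d
    (V : ℝ)
    (ρd : Ω → ℕ) (hρd : ρd ∈ 𝒯)
    (hρdopt : V = ⨆ τ : 𝒯,
      ∫ ω, (if τ.1 ω ≤ ρd ω then V1 (τ.1 ω) ω else V2 (ρd ω) ω) ∂μ)
    -- optimizers ρ_u(t) of V¹_t
    (ρu : ℕ → Ω → ℕ)
    (hρu : ∀ t ≤ T, IsStoppingTime ℱ (fun ω => (ρu t ω : WithTop ℕ)) ∧ ∀ ω, t ≤ ρu t ω ∧ ρu t ω ≤ T)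
    (hρuopt : ∀ t ≤ T, V1 t =ᵐ[μ] μ[fun ω => U (ρu t ω) t ω | ℱ t])
    -- the strategy ρ*
    (ρstar : (Ω → ℕ) → Ω → ℕ)
    (hρstar : ∀ τ ω, ρstar τ ω = if ρd ω < τ ω then ρd ω else ρu (τ ω) ω) :
    (⨆ τ : 𝒯, ∫ ω, U (ρstar τ.1 ω) (τ.1 ω) ω ∂μ) ≤ V ∧
    (⨅ ρ : {ρ : (Ω → ℕ) → Ω → ℕ // TypeII ρ}, ⨆ τ : 𝒯,
      ∫ ω, U (ρ.1 τ.1 ω) (τ.1 ω) ω ∂μ) ≤ V := by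
  obtain ⟨C, hC⟩ := hUbdd
  subst h𝒯 hρdopt
  obtain rfl : ρstar = strategy ρd ρu := funext₂ hρstar
  have hUi : ∀ s t, Integrable (U s t) μ := fun s t =>
    .of_bound ((hUmeas s t).mono (ℱ.le _)).aestronglyMeasurable C (.of_forall (hC s t))
  have hUC : ∀ s t ω, U s t ω ≤ C := fun s t ω => (le_abs_self _).trans (hC s t ω)
  have hV1le : ∀ t ≤ T, ∀ᵐ ω ∂μ, V1 t ω ≤ C := fun t ht =>
    ae_le_const_of_ae_eq_condExp (ℱ.le t) (integrable_apply_of_isStoppingTime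
      (X := fun n => U n t) (fun n => hUi n t) (hρu t ht).1 fun ω => ((hρu t ht).2 ω).2)
      (.of_forall fun ω => hUC _ _ ω) (hρuopt t ht)
  have hSle : ∀ t < T, ∀ᵐ ω ∂μ, S t ω ≤ C := fun t ht =>
    hSleast t ht (fun _ => C) fun τ hτ hτb => ae_condExp_le_const (ℱ.le t)
      (integrable_apply_of_isStoppingTime (hUi t) hτ fun ω => (hτb ω).2)
      (.of_forall fun ω => hUC _ _ ω)
  have hSi : ∀ t < T, Integrable (S t) μ := fun t ht => by
    have hUad : ∀ n, t + 1 ≤ n → StronglyMeasurable[ℱ n] (U t n) := fun n hn => by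
      have := hUmeas t n
      rwa [max_eq_right (by omega : t ≤ n)] at this
    exact integrable_condExp.congr (ae_eq_condExp_snellEnvelope hUad (hUi t) t.le_succ le_rfl ht
      (hSge t ht) (hSleast t ht)).symm
  have hpayoff := fun τ hτ hτT => integrable_dynkinPayoff_and_integral_le (τ := τ) hUi hρu hρuopt
    hSge hSi hV2 hρd.1 hτ hτT
  have hstrategy : TypeII (strategy ρd ρu) := (hTypeII _).2
    ⟨fun σ hσ => isStoppingTime_strategy hρd.1 hρd.2 hρu hσ.1 hσ.2,
      fun σ₁ h₁ σ₂ h₂ ω => strategy_nonanticipative ((hρu _ (h₁.2 ω)).2 ω).1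
        ((hρu _ (h₂.2 ω)).2 ω).1⟩
  refine ⟨?_, (ciInf_ciSup_le_ciSup (fun _ _ => abs_integral_le_of_abs_le fun ω => hC _ _ ω)
    ⟨fun _ => T, isStoppingTime_const ℱ T, fun _ => le_rfl⟩ ⟨_, hstrategy⟩).trans ?_⟩
  all_goals
    refine ciSup_mono ⟨C, ?_⟩ fun τ => (hpayoff _ τ.2.1 τ.2.2).2
    rintro _ ⟨τ, rfl⟩
    exact integral_dynkinPayoff_le hV1le hSle hV2 τ.2.2 (hpayoff _ τ.2.1 τ.2.2).1

/-- With the Type II strategy `ρ*(τ) := ρ_d 1_{τ>ρ_d} + ρ_u(τ) 1_{τ≤ρ_d}`, where `ρ_d` is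
the Dynkin-game saddle component and `ρ_u(t)` optimizes `V¹_t`, one has
`sup_{τ∈𝒯} E[U(ρ*(τ),τ)] ≤ V`; in particular `inf_{ρ∈𝕋ⁱⁱ} sup_{τ∈𝒯} E[U(ρ(τ),τ)] ≤ V`. -/
theorem stmt_14 {Ω : Type*} {m : MeasurableSpace Ω} {μ : Measure Ω} [IsProbabilityMeasure μ]
    (ℱ : Filtration ℕ m) (T : ℕ)
    (U : ℕ → ℕ → Ω → ℝ)
    (hUmeas : ∀ s t, StronglyMeasurable[ℱ (max s t)] (U s t))
    (hUbdd : ∃ C, ∀ s t ω, |U s t ω| ≤ C)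
    (𝒯 : Set (Ω → ℕ))
    (h𝒯 : 𝒯 = {σ | IsStoppingTime ℱ (fun ω => (σ ω : WithTop ℕ)) ∧ ∀ ω, σ ω ≤ T})
    (V1 S V2 : ℕ → Ω → ℝ)
    (hV1le : ∀ t ≤ T, ∀ ρ : Ω → ℕ, IsStoppingTime ℱ (fun ω => (ρ ω : WithTop ℕ)) → (∀ ω, t ≤ ρ ω ∧ ρ ω ≤ T) →
      V1 t ≤ᵐ[μ] μ[fun ω => U (ρ ω) t ω | ℱ t])
    (hV1greatest : ∀ t ≤ T, ∀ Z : Ω → ℝ,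
      (∀ ρ : Ω → ℕ, IsStoppingTime ℱ (fun ω => (ρ ω : WithTop ℕ)) → (∀ ω, t ≤ ρ ω ∧ ρ ω ≤ T) →
        Z ≤ᵐ[μ] μ[fun ω => U (ρ ω) t ω | ℱ t]) → Z ≤ᵐ[μ] V1 t)
    (hSge : ∀ t < T, ∀ τ : Ω → ℕ, IsStoppingTime ℱ (fun ω => (τ ω : WithTop ℕ)) → (∀ ω, t + 1 ≤ τ ω ∧ τ ω ≤ T) →
      μ[fun ω => U t (τ ω) ω | ℱ t] ≤ᵐ[μ] S t)
    (hSleast : ∀ t < T, ∀ Z : Ω → ℝ,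
      (∀ τ : Ω → ℕ, IsStoppingTime ℱ (fun ω => (τ ω : WithTop ℕ)) → (∀ ω, t + 1 ≤ τ ω ∧ τ ω ≤ T) →
        μ[fun ω => U t (τ ω) ω | ℱ t] ≤ᵐ[μ] Z) → S t ≤ᵐ[μ] Z)
    (hV2 : ∀ t < T, ∀ ω, V2 t ω = max (S t ω) (V1 t ω))
    (hV2T : V2 T = U T T)
    (TypeII : ((Ω → ℕ) → Ω → ℕ) → Prop)
    (hTypeII : ∀ ρ, TypeII ρ ↔ ((∀ σ ∈ 𝒯, ρ σ ∈ 𝒯) ∧ ∀ σ₁ ∈ 𝒯, ∀ σ₂ ∈ 𝒯, ∀ ω,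
      (ρ σ₁ ω = ρ σ₂ ω ∧ ρ σ₁ ω < min (σ₁ ω) (σ₂ ω)) ∨
        min (σ₁ ω) (σ₂ ω) ≤ min (ρ σ₁ ω) (ρ σ₂ ω)))
    -- the Dynkin game value V and its optimal ρ_d
    (V : ℝ)
    (hV : V = ⨅ ρ : 𝒯, ⨆ τ : 𝒯,
      ∫ ω, (if τ.1 ω ≤ ρ.1 ω then V1 (τ.1 ω) ω else V2 (ρ.1 ω) ω) ∂μ)
    (ρd : Ω → ℕ) (hρd : ρd ∈ 𝒯)
    (hρdopt : V = ⨆ τ : 𝒯,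
      ∫ ω, (if τ.1 ω ≤ ρd ω then V1 (τ.1 ω) ω else V2 (ρd ω) ω) ∂μ)
    -- optimizers ρ_u(t) of V¹_t
    (ρu : ℕ → Ω → ℕ)
    (hρu : ∀ t ≤ T, IsStoppingTime ℱ (fun ω => (ρu t ω : WithTop ℕ)) ∧ ∀ ω, t ≤ ρu t ω ∧ ρu t ω ≤ T)
    (hρuopt : ∀ t ≤ T, V1 t =ᵐ[μ] μ[fun ω => U (ρu t ω) t ω | ℱ t])
    -- the strategy ρ*
    (ρstar : (Ω → ℕ) → Ω → ℕ)
    (hρstar : ∀ τ ω, ρstar τ ω = if ρd ω < τ ω then ρd ω else ρu (τ ω) ω) :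
    (⨆ τ : 𝒯, ∫ ω, U (ρstar τ.1 ω) (τ.1 ω) ω ∂μ) ≤ V ∧
    (⨅ ρ : {ρ : (Ω → ℕ) → Ω → ℕ // TypeII ρ}, ⨆ τ : 𝒯,
      ∫ ω, U (ρ.1 τ.1 ω) (τ.1 ω) ω ∂μ) ≤ V :=
  stmt_14_general ℱ T U hUmeas hUbdd 𝒯 h𝒯 V1 S V2 hSge hSleast hV2 TypeII hTypeII V ρd hρd hρdopt ρu
    hρu hρuopt ρstar hρstar
end
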